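/- Let F(x) = e^x - x - 1, a formal power series with lowest-order term x^2/2. For a nonnegative integer z, define the potential polynomials G_n^{(z)} by ((x^2/2)/F(x))^z = Σ_{n≥0} G_n^{(z)} x^n/n!. Then G_n^{(z)} = Σ_{i=0}^{n} (-1)^i C(z+i-1, i) C(z+n, n-i) 2^i (n! i!/(n+2i)!) B_{n+2i, i}, where B_{m,i} is the coefficient defined by (F(x))^i = i! Σ_{m≥0} B_{m,i} x^m/m!. -/

import Mathlib

/-!
Write `e^x - x - 1 = (x²/2)·g` with `g(0) = 1`. Then `H = g⁻¹` and
`B_{n+2i,i} = (n+2i)!/(i! 2^i) · [x^n] g^i`, so the formula becomes Howard's identity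
`[x^n] g^{-z} = Σ_{i ≤ n} C(-z,i) C(z+n,n-i) [x^n] g^i`, valid for every `g` with `g(0) = 1`.
With `h = g - 1`, substituting `h` into the binomial series of `(1+X)^{-z}` and `(1+X)^i` writes
both sides as combinations of the `[x^n] h^j`, `j ≤ n`, and the coefficients agree because
`Σ_i C(-z,i) C(z+n,n-i) C(i,j) = C(-z,j)`: after `C(-z,i) C(i,j) = C(-z,j) C(-z-j,i-j)` this is
Chu–Vandermonde.
-/

open PowerSeries Finset

lemma Ring.choose_neg_natCast (z i : ℕ) :
    Ring.choose (-(z : ℤ)) i = (-1) ^ i * ((z + i - 1).choose i : ℤ) := by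
  rw [Ring.choose_neg, Units.smul_def, Int.coe_negOnePow_natCast]
  rcases Nat.eq_zero_or_pos (z + i) with h | h
  · obtain ⟨rfl, rfl⟩ : z = 0 ∧ i = 0 := by omega
    simp
  · rw [show (z : ℤ) + i - 1 = ((z + i - 1 : ℕ) : ℤ) by omega, Ring.choose_natCast,
      smul_eq_mul]

lemma sum_choose_neg_mul_choose_mul_choose (z n j : ℕ) (hj : j ≤ n) :
    ∑ i ∈ range (n + 1), Ring.choose (-(z : ℤ)) i * (z + n).choose (n - i) * i.choose j =
      Ring.choose (-(z : ℤ)) j := by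
  have vandermonde :
      ∑ k ∈ range (n - j + 1),
        Ring.choose (-(z : ℤ) - j) k * (z + n).choose (n - j - k) = 1 := by
    have h := Ring.add_choose_eq (n - j) (Commute.all (-(z : ℤ) - j) ((z + n : ℕ) : ℤ))
    rw [show -(z : ℤ) - j + ((z + n : ℕ) : ℤ) = ((n - j : ℕ) : ℤ) by omega,
      Ring.choose_natCast, Nat.choose_self, Nat.sum_antidiagonal_eq_sum_range_succ
        (fun a b => Ring.choose (-(z : ℤ) - j) a * Ring.choose ((z + n : ℕ) : ℤ) b)] at h
    simp only [Ring.choose_natCast] at h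
    exact_mod_cast h.symm
  rw [show n + 1 = j + (n - j + 1) by omega, sum_range_add,
    sum_eq_zero fun i hi => by rw [Nat.choose_eq_zero_of_lt (mem_range.1 hi), Nat.cast_zero,
      mul_zero], zero_add, ← mul_one (Ring.choose _ j), ← vandermonde, mul_sum]
  refine sum_congr rfl fun k _ => ?_
  have h := Ring.choose_smul_choose (-(z : ℤ)) (Nat.le_add_right j k)
  rw [Nat.add_sub_cancel_left, nsmul_eq_mul] at h
  rw [← mul_assoc, ← h, show n - (j + k) = n - j - k by omega]
  ring

namespace PowerSeries

variable {R : Type*} [CommRing R]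

lemma coeff_pow_eq_zero_of_lt {h : R⟦X⟧} (hh : constantCoeff h = 0) {n j : ℕ} (hnj : n < j) :
    coeff n (h ^ j) = 0 :=
  X_pow_dvd_iff.mp (pow_dvd_pow_of_dvd (X_dvd_iff.mpr hh) j) n hnj

lemma coeff_subst_eq_sum_range {h : R⟦X⟧} (hh : constantCoeff h = 0) (f : R⟦X⟧) (n : ℕ) :
    coeff n (f.subst h) = ∑ j ∈ range (n + 1), coeff j f * coeff n (h ^ j) := by
  rw [coeff_subst' (HasSubst.of_constantCoeff_zero' hh),
    finsum_eq_sum_of_support_subset (s := range (n + 1)) _ fun j hj => ?_]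
  · simp only [smul_eq_mul]
  refine mem_coe.2 (mem_range_succ_iff.2 (not_lt.1 fun hnj => hj ?_))
  simp only [coeff_pow_eq_zero_of_lt hh hnj, smul_zero]

lemma subst_binomialSeries_natCast {h : R⟦X⟧} (hh : constantCoeff h = 0) (d : ℕ) :
    (binomialSeries R (d : ℤ)).subst h = (1 + h) ^ d := by
  have hs := HasSubst.of_constantCoeff_zero' hh
  rw [binomialSeries_nat, subst_pow hs, subst_add hs, subst_X hs, ← map_one (C (R := R)), subst_C]
  rfl

lemma subst_binomialSeries_neg_natCast {h H : R⟦X⟧} (hh : constantCoeff h = 0)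
    (hH : (1 + h) * H = 1) (d : ℕ) :
    (binomialSeries R (-(d : ℤ))).subst h = H ^ d := by
  have hs := HasSubst.of_constantCoeff_zero' hh
  have hprod : (binomialSeries R (-(d : ℤ))).subst h * (1 + h) ^ d = 1 := by
    rw [← subst_binomialSeries_natCast hh, ← subst_mul hs, ← binomialSeries_add,
      neg_add_cancel, binomialSeries_zero, ← map_one (C (R := R)), subst_C]
    rfl
  calc (binomialSeries R (-(d : ℤ))).subst h
      = (binomialSeries R (-(d : ℤ))).subst h * ((1 + h) * H) ^ d := by rw [hH, one_pow, mul_one]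
    _ = H ^ d := by rw [mul_pow, ← mul_assoc, hprod, one_mul]

lemma coeff_binomialSeries_subst {h : R⟦X⟧} (hh : constantCoeff h = 0) (r : ℤ) (n : ℕ) :
    coeff n ((binomialSeries R r).subst h) =
      ∑ j ∈ range (n + 1), ((Ring.choose r j : ℤ) : R) * coeff n (h ^ j) := by
  simp only [coeff_subst_eq_sum_range hh, binomialSeries_coeff, zsmul_one]

theorem coeff_pow_eq_sum_of_mul_eq_one {g H : R⟦X⟧} (hg : constantCoeff g = 1)
    (hH : g * H = 1) (z n : ℕ) :
    coeff n (H ^ z) = ∑ i ∈ range (n + 1),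
      ((Ring.choose (-(z : ℤ)) i * (z + n).choose (n - i) : ℤ) : R) * coeff n (g ^ i) := by
  obtain ⟨h, rfl⟩ : ∃ h, g = 1 + h := ⟨g - 1, (add_sub_cancel 1 g).symm⟩
  have hh : constantCoeff h = 0 := by simpa using hg
  rw [← subst_binomialSeries_neg_natCast hh hH, coeff_binomialSeries_subst hh]
  simp only [← subst_binomialSeries_natCast hh, coeff_binomialSeries_subst hh, mul_sum,
    ← mul_assoc]
  rw [sum_comm]
  refine sum_congr rfl fun j hj => ?_
  rw [← sum_mul, ← sum_choose_neg_mul_choose_mul_choose z n j (mem_range_succ_iff.1 hj)]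
  push_cast [Ring.choose_natCast]
  rfl

end PowerSeries

lemma exists_exp_sub_X_sub_one_eq :
    ∃ g : ℚ⟦X⟧, constantCoeff g = 1 ∧ exp ℚ - X - 1 = C (1 / 2 : ℚ) * X ^ 2 * g := by
  obtain ⟨q, hq⟩ : (X : ℚ⟦X⟧) ^ 2 ∣ exp ℚ - X - 1 := by
    refine X_pow_dvd_iff.2 fun m hm => ?_
    interval_cases m <;> simp [coeff_exp, coeff_X, coeff_one]
  refine ⟨C 2 * q, ?_, ?_⟩
  · have hq0 : constantCoeff q = 1 / 2 := by
      simpa [coeff_exp, coeff_X, coeff_one, coeff_X_pow_mul'] using (congrArg (coeff 2) hq).symm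
    simp [hq0]
  · rw [hq, mul_comm (C _) (X ^ 2), mul_assoc, ← mul_assoc (C _), ← map_mul]
    norm_num

/-- Howard's theorem specialized to `F(x) = e^x - x - 1`: with `B m i` the coefficients
defined by `F^i = i! Σ_m B_{m,i} x^m/m!` and `H = (x²/2)/F` (so `F * H = x²/2`), the
potential polynomials `G_n^{(z)} = n! · [x^n] H^z` satisfy
`G_n^{(z)} = Σ_{i=0}^n (-1)^i C(z+i-1,i) C(z+n,n-i) 2^i (n! i!/(n+2i)!) B_{n+2i,i}`. -/
theorem potential_polynomial_formula (z : ℕ) (B : ℕ → ℕ → ℚ)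
    (hB : ∀ i m : ℕ, PowerSeries.coeff (R := ℚ) m ((PowerSeries.exp ℚ - PowerSeries.X - 1) ^ i) =
      (i.factorial : ℚ) * B m i / (m.factorial : ℚ))
    (H : PowerSeries ℚ)
    (hH : (PowerSeries.exp ℚ - PowerSeries.X - 1) * H =
      PowerSeries.C (R := ℚ) (1 / 2) * PowerSeries.X ^ 2)
    (n : ℕ) :
    (n.factorial : ℚ) * PowerSeries.coeff (R := ℚ) n (H ^ z) =
      ∑ i ∈ Finset.range (n + 1),
        (-1) ^ i * ((z + i - 1).choose i : ℚ) * ((z + n).choose (n - i) : ℚ) * 2 ^ i *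
          ((n.factorial : ℚ) * (i.factorial : ℚ) / ((n + 2 * i).factorial : ℚ)) *
          B (n + 2 * i) i := by
  obtain ⟨g, hg, hF⟩ := exists_exp_sub_X_sub_one_eq
  have hgH : g * H = 1 :=
    mul_left_cancel₀ (a := C (1 / 2 : ℚ) * X ^ 2) (mul_ne_zero (by simp) (pow_ne_zero 2 X_ne_zero))
      (by rw [← mul_assoc, ← hF, hH, mul_one])
  have hBg : ∀ i, coeff n (g ^ i) =
      2 ^ i * ((i.factorial : ℚ) / (n + 2 * i).factorial) * B (n + 2 * i) i := by
    intro i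
    have h := hB i (n + 2 * i)
    rw [hF, mul_pow, mul_pow, ← map_pow, ← pow_mul, mul_assoc, coeff_C_mul, coeff_X_pow_mul,
      one_div, inv_pow] at h
    field_simp at h ⊢
    linear_combination h
  rw [coeff_pow_eq_sum_of_mul_eq_one hg hgH, mul_sum]
  refine sum_congr rfl fun i _ => ?_
  rw [hBg, Ring.choose_neg_natCast]
  push_cast
  ring
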